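/- arXiv:1411.2935 — 3 statements merged into one kernel-verified Lean document; each statement's English description precedes it below -/
import Mathlib

section
/- Let r ≥ 1 be odd and let l_1,…,l_r, θ_1,…,θ_r, L be real numbers. Then the trace of A(l_1,θ_1)·A(l_2,θ_2)⋯A(l_r,θ_r)·γ_L equals the sum over all subsets I ⊆ {1,…,r} of even cardinality of (−1)^{s(I)} · 2 · sin θ_I · cos θ_{Î} · sinh(L/2 − L_I). -/
open Finset

/-- The matrix `A(l,θ) = [[cos θ, −e^l sin θ], [−e^{−l} sin θ, −cos θ]]`. -/
noncomputable def Amat (l θ : ℝ) : Matrix (Fin 2) (Fin 2) ℝ :=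
  !![Real.cos θ, -Real.exp l * Real.sin θ; -Real.exp (-l) * Real.sin θ, -Real.cos θ]

/-- The matrix `γ_L = diag(e^{L/2}, e^{−L/2})`. -/
noncomputable def gammaMat (L : ℝ) : Matrix (Fin 2) (Fin 2) ℝ :=
  !![Real.exp (L / 2), 0; 0, Real.exp (-(L / 2))]

/-- The matrix `S(z) = diag(e^{z/2}, e^{−z/2})`. -/
noncomputable def Smat (z : ℝ) : Matrix (Fin 2) (Fin 2) ℝ :=
  !![Real.exp (z / 2), 0; 0, Real.exp (-(z / 2))]

/-- The matrix `D = diag(1, −1)`. -/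
def Dmat : Matrix (Fin 2) (Fin 2) ℝ := !![1, 0; 0, -1]

/-- Alternating length `L_I = Σ_{j=1}^k (−1)^j l_{i_j}` for `I = {i_1 < ⋯ < i_k}`. -/
def altLen {r : ℕ} (l : Fin r → ℝ) (I : Finset (Fin r)) : ℝ :=
  let s := (I.sort (· ≤ ·)).map l
  ∑ j ∈ Finset.range s.length, (-1 : ℝ) ^ (j + 1) * s.getD j 0

/-- Signature `s(I) = (i_2−i_1+1) + (i_4−i_3+1) + ⋯ + (i_k−i_{k−1}+1)` for `I` of even
cardinality, with `s(∅) = 0`. -/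
def sig {r : ℕ} (I : Finset (Fin r)) : ℕ :=
  let s := (I.sort (· ≤ ·)).map Fin.val
  ∑ m ∈ Finset.range (s.length / 2), (s.getD (2 * m + 1) 0 - s.getD (2 * m) 0 + 1)

/-- `P(k,n)`: the set of `n`-tuples of nonnegative integers summing to `k`. -/
def Pkn (k n : ℕ) : Finset (Fin n → ℕ) := Finset.Nat.antidiagonalTuple n k

/-- `B_{n,k,r}`: sum of multinomial coefficients `(k choose q)` over `q ∈ P(k,n)` whose
first `r` entries are odd and remaining entries are even. -/
def Bnkr (n k r : ℕ) : ℕ :=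
  ∑ q ∈ (Pkn k n).filter
      (fun q => ∀ i : Fin n, ((i : ℕ) < r → Odd (q i)) ∧ (r ≤ (i : ℕ) → Even (q i))),
    Nat.multinomial Finset.univ q

/-!
Write `A(l,θ) = cos θ • D - sin θ • S(2l) J` with `J = [[0,1],[1,0]]`. Since `D` commutes with
`S(z)`, `J S(z) = S(-z) J` and `J D = -D J`, every product of the matrices `D` and `S(2l) J` has
the normal form `S(z) D^a J^b`. Expanding `A(l₁,θ₁) ⋯ A(l_r,θ_r)` thus gives a sum over the set
`I` of positions at which `S(2lᵢ) J` is chosen, with `z = -2 L_I`, `a = r - |I|`, `b = |I|`.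
After multiplying by `γ_L = S(L)`, the trace of such a term vanishes for `b` odd and equals
`2 sinh ((z + L) / 2)` for `b` even and `a` odd, which for odd `r` is the case `|I|` even.
It remains to see that the sign produced by the expansion is `(-1)^{s(I)}` when `|I|` is even.
-/

def Jmat : Matrix (Fin 2) (Fin 2) ℝ := !![0, 1; 1, 0]

noncomputable def wordMat (z : ℝ) (a b : ℕ) : Matrix (Fin 2) (Fin 2) ℝ :=
  Smat z * Dmat ^ a * Jmat ^ b

lemma gammaMat_eq_Smat : gammaMat = Smat := rfl

lemma Smat_add (z w : ℝ) : Smat (z + w) = Smat z * Smat w := by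
  simp only [Smat, Matrix.mul_fin_two, ← Real.exp_add]
  congr <;> ring_nf

lemma Smat_zero : Smat 0 = 1 := by
  simp [Smat, Matrix.one_fin_two]

lemma Dmat_mul_self : Dmat * Dmat = 1 := by
  simp [Dmat, Matrix.one_fin_two]

lemma Jmat_mul_self : Jmat * Jmat = 1 := by
  simp [Jmat, Matrix.one_fin_two]

lemma Dmat_pow (a : ℕ) : Dmat ^ a = Dmat ^ (a % 2) :=
  pow_eq_pow_mod a (by rw [sq, Dmat_mul_self])

lemma Jmat_pow (b : ℕ) : Jmat ^ b = Jmat ^ (b % 2) :=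
  pow_eq_pow_mod b (by rw [sq, Jmat_mul_self])

lemma Dmat_commute_Smat (z : ℝ) : Commute Dmat (Smat z) := by
  simp [Commute, SemiconjBy, Dmat, Smat]

lemma Jmat_mul_Smat (z : ℝ) : Jmat * Smat z = Smat (-z) * Jmat := by
  simp [Jmat, Smat, neg_div]

lemma Jmat_mul_Dmat_pow (a : ℕ) : Jmat * Dmat ^ a = (-1 : ℝ) ^ a • (Dmat ^ a * Jmat) := by
  have h : SemiconjBy Jmat Dmat (-Dmat) := by
    simp [SemiconjBy, Jmat, Dmat]
  rw [(h.pow_right a).eq, neg_pow, Algebra.smul_def, map_pow, map_neg, map_one, mul_assoc]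

lemma Amat_eq (l θ : ℝ) :
    Amat l θ = Real.cos θ • Dmat - Real.sin θ • (Smat (2 * l) * Jmat) := by
  ext i j
  fin_cases i <;> fin_cases j <;>
    simp [Amat, Smat, Dmat, Jmat, mul_div_cancel_left₀] <;> ring

lemma Amat_mul_wordMat (l θ z : ℝ) (a b : ℕ) :
    Amat l θ * wordMat z a b =
      Real.cos θ • wordMat z (a + 1) b -
        ((-1) ^ a * Real.sin θ) • wordMat (2 * l - z) a (b + 1) := by
  rw [Amat_eq, sub_mul, Matrix.smul_mul, Matrix.smul_mul, wordMat, wordMat, wordMat]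
  congr 1
  · rw [← Matrix.mul_assoc, ← Matrix.mul_assoc, (Dmat_commute_Smat z).eq,
      Matrix.mul_assoc (Smat z), ← pow_succ']
  · rw [mul_comm ((-1 : ℝ) ^ a), ← smul_smul]
    congr 1
    simp only [Matrix.mul_assoc]
    rw [← Matrix.mul_assoc Jmat, Jmat_mul_Smat, Matrix.mul_assoc, ← Matrix.mul_assoc Jmat,
      Jmat_mul_Dmat_pow]
    simp only [Matrix.mul_smul, Matrix.smul_mul, ← Matrix.mul_assoc, sub_eq_add_neg, Smat_add,
      pow_succ']

lemma trace_wordMat_mul_Smat_of_odd (z L : ℝ) (a : ℕ) {b : ℕ} (hb : Odd b) :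
    Matrix.trace (wordMat z a b * Smat L) = 0 := by
  rw [wordMat, Dmat_pow, Jmat_pow, Nat.odd_iff.mp hb]
  rcases Nat.mod_two_eq_zero_or_one a with ha | ha <;>
    simp [ha, Smat, Dmat, Jmat, Matrix.trace_fin_two]

lemma trace_wordMat_mul_Smat_of_odd_of_even (z L : ℝ) {a b : ℕ} (ha : Odd a) (hb : Even b) :
    Matrix.trace (wordMat z a b * Smat L) = 2 * Real.sinh ((z + L) / 2) := by
  rw [wordMat, Dmat_pow, Jmat_pow, Nat.odd_iff.mp ha, Nat.even_iff.mp hb, Real.sinh_eq]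
  simp [Smat, Dmat, Matrix.trace_fin_two, ← Real.exp_add]
  ring_nf

lemma Finset.sum_powerset_map {α β M : Type*} [AddCommMonoid M] (e : α ↪ β) (s : Finset α)
    (f : Finset β → M) :
    ∑ t ∈ (s.map e).powerset, f t = ∑ t ∈ s.powerset, f (t.map e) := by
  refine (sum_nbij (fun t : Finset α => t.map e) (fun t ht => ?_)
    (fun t _ u _ h => map_injective e h) (fun u hu => ?_) fun _ _ => rfl).symm
  · simpa using ht
  · obtain ⟨t, ht, rfl⟩ := subset_map_iff.mp (mem_powerset.mp hu)
    exact ⟨t, mem_powerset.mpr ht, rfl⟩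

lemma List.sum_range_neg_one_pow_succ_mul_getD {R : Type*} [Ring R] (s : List R) :
    ∑ j ∈ Finset.range s.length, (-1 : R) ^ (j + 1) * s.getD j 0 = -s.alternatingSum := by
  induction s with
  | nil => simp
  | cons a t ih =>
    simp only [List.length_cons, Finset.sum_range_succ', List.getD_cons_succ, List.getD_cons_zero,
      pow_succ _ (_ + 1), mul_neg_one, neg_mul, Finset.sum_neg_distrib, ih,
      List.alternatingSum_cons, zero_add, pow_one, one_mul]
    abel

lemma Nat.succ_choose_two (n : ℕ) : (n + 1).choose 2 = n.choose 2 + n := by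
  simp [Nat.choose_succ_succ, add_comm]

lemma Nat.two_mul_choose_two_mod_two (n : ℕ) : (2 * n).choose 2 % 2 = n % 2 := by
  induction n with
  | zero => rfl
  | succ n ih =>
    rw [mul_add_one, Nat.succ_choose_two, Nat.succ_choose_two]
    omega

section FinSucc

variable {r : ℕ}

lemma zero_notMem_map_succEmb (I : Finset (Fin r)) :
    (0 : Fin (r + 1)) ∉ I.map (Fin.succEmb r) := by
  simp [Fin.succ_ne_zero]

lemma sum_finset_fin_succ {M : Type*} [AddCommMonoid M] (f : Finset (Fin (r + 1)) → M) :
    ∑ I, f I = ∑ I : Finset (Fin r),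
      (f (I.map (Fin.succEmb r)) + f (insert 0 (I.map (Fin.succEmb r)))) := by
  rw [← powerset_univ, Fin.univ_succ, cons_eq_insert, sum_powerset_insert (by simp),
    sum_powerset_map, sum_powerset_map, ← sum_add_distrib, powerset_univ]
  rfl

lemma compl_map_succEmb (I : Finset (Fin r)) :
    (I.map (Fin.succEmb r))ᶜ = insert 0 (Iᶜ.map (Fin.succEmb r)) := by
  ext x
  cases x using Fin.cases <;> simp [Fin.succ_ne_zero]

lemma compl_insert_zero_map_succEmb (I : Finset (Fin r)) :
    (insert 0 (I.map (Fin.succEmb r)))ᶜ = Iᶜ.map (Fin.succEmb r) := by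
  rw [compl_insert, compl_map_succEmb, erase_insert (zero_notMem_map_succEmb Iᶜ)]

lemma sum_val_map_succEmb (I : Finset (Fin r)) :
    ∑ i ∈ I.map (Fin.succEmb r), (i : ℕ) = ∑ i ∈ I, (i : ℕ) + #I := by
  simp [sum_add_distrib]

lemma sort_map_succEmb (I : Finset (Fin r)) :
    (I.map (Fin.succEmb r)).sort (· ≤ ·) = (I.sort (· ≤ ·)).map Fin.succ :=
  (map_sort _ _ _ _ fun _ _ _ _ => Fin.succ_le_succ_iff.symm).symm

lemma sort_insert_zero_map_succEmb (I : Finset (Fin r)) :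
    (insert 0 (I.map (Fin.succEmb r))).sort (· ≤ ·) = 0 :: (I.map (Fin.succEmb r)).sort (· ≤ ·) :=
  sort_insert _ (fun b _ => Fin.zero_le b) (zero_notMem_map_succEmb I)

lemma altLen_eq_neg_alternatingSum (l : Fin r → ℝ) (I : Finset (Fin r)) :
    altLen l I = -((I.sort (· ≤ ·)).map l).alternatingSum :=
  List.sum_range_neg_one_pow_succ_mul_getD _

lemma altLen_map_succEmb (l : Fin (r + 1) → ℝ) (I : Finset (Fin r)) :
    altLen l (I.map (Fin.succEmb r)) = altLen (Fin.tail l) I := by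
  rw [altLen_eq_neg_alternatingSum, altLen_eq_neg_alternatingSum, sort_map_succEmb, List.map_map]
  rfl

lemma altLen_insert_zero_map_succEmb (l : Fin (r + 1) → ℝ) (I : Finset (Fin r)) :
    altLen l (insert 0 (I.map (Fin.succEmb r))) = -l 0 - altLen (Fin.tail l) I := by
  rw [altLen_eq_neg_alternatingSum, sort_insert_zero_map_succEmb, List.map_cons,
    List.alternatingSum_cons, ← altLen_map_succEmb, altLen_eq_neg_alternatingSum]
  ring

/-- Modulo 2 the exponent equals `#I + ∑ i ∈ I, #{j ∉ I | i < j}`: one sign for each chosen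
`-sin θᵢ • S(2lᵢ) J`, and one each time its `J` passes a factor `D` further right. -/
noncomputable def expansionCoeff (θ : Fin r → ℝ) (I : Finset (Fin r)) : ℝ :=
  (-1) ^ (r * #I + ∑ i ∈ I, (i : ℕ) + (#I).choose 2) *
    (∏ i ∈ I, Real.sin (θ i)) * ∏ i ∈ Iᶜ, Real.cos (θ i)

lemma expansionCoeff_map_succEmb (θ : Fin (r + 1) → ℝ) (I : Finset (Fin r)) :
    expansionCoeff θ (I.map (Fin.succEmb r)) =
      Real.cos (θ 0) * expansionCoeff (Fin.tail θ) I := by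
  have hsign : (-1 : ℝ) ^ ((r + 1) * #I + (∑ i ∈ I, (i : ℕ) + #I) + (#I).choose 2) =
      (-1) ^ (r * #I + ∑ i ∈ I, (i : ℕ) + (#I).choose 2) := by
    refine neg_one_pow_congr ?_
    rw [add_one_mul]
    simp only [Nat.even_iff]
    omega
  rw [expansionCoeff, expansionCoeff, card_map, sum_val_map_succEmb, hsign, compl_map_succEmb,
    prod_insert (zero_notMem_map_succEmb _), prod_map, prod_map]
  simp only [Fin.coe_succEmb, Fin.tail]
  ring

lemma expansionCoeff_insert_zero_map_succEmb (θ : Fin (r + 1) → ℝ) (I : Finset (Fin r)) :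
    expansionCoeff θ (insert 0 (I.map (Fin.succEmb r))) =
      -((-1) ^ (r - #I) * Real.sin (θ 0)) * expansionCoeff (Fin.tail θ) I := by
  have hI : #I ≤ r := by simpa using card_le_univ I
  have hsign : (-1 : ℝ) ^ ((r + 1) * (#I + 1) + (0 + (∑ i ∈ I, (i : ℕ) + #I)) +
      (#I + 1).choose 2) =
      (-1) ^ (1 + (r - #I) + (r * #I + ∑ i ∈ I, (i : ℕ) + (#I).choose 2)) := by
    refine neg_one_pow_congr ?_
    rw [Nat.succ_choose_two, add_one_mul, mul_add_one]
    simp only [Nat.even_iff]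
    omega
  rw [expansionCoeff, expansionCoeff, card_insert_of_notMem (zero_notMem_map_succEmb _),
    card_map, sum_insert (zero_notMem_map_succEmb _), sum_val_map_succEmb, Fin.val_zero, hsign,
    compl_insert_zero_map_succEmb, prod_insert (zero_notMem_map_succEmb _), prod_map, prod_map]
  simp only [Fin.coe_succEmb, Fin.tail, pow_add, pow_one]
  ring

end FinSucc

theorem prod_Amat_eq_sum (r : ℕ) (l θ : Fin r → ℝ) :
    (List.ofFn fun i => Amat (l i) (θ i)).prod =
      ∑ I, expansionCoeff θ I • wordMat (-2 * altLen l I) (r - #I) #I := by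
  induction r with
  | zero =>
    rw [Fintype.sum_subsingleton _ ∅]
    simp [expansionCoeff, altLen_eq_neg_alternatingSum, wordMat, Smat_zero]
  | succ r ih =>
    rw [List.ofFn_succ, List.prod_cons]
    change _ * (List.ofFn fun i => Amat (Fin.tail l i) (Fin.tail θ i)).prod = _
    rw [ih, mul_sum, sum_finset_fin_succ]
    refine sum_congr rfl fun I _ => ?_
    have hI : #I ≤ r := by simpa using card_le_univ I
    rw [mul_smul_comm, Amat_mul_wordMat, expansionCoeff_map_succEmb,
      expansionCoeff_insert_zero_map_succEmb, card_map,
      card_insert_of_notMem (zero_notMem_map_succEmb _), card_map, altLen_map_succEmb,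
      altLen_insert_zero_map_succEmb, Nat.sub_add_comm hI, Nat.add_sub_add_right,
      smul_sub, smul_smul, smul_smul, sub_eq_add_neg, ← neg_smul]
    congr 1
    · rw [mul_comm]
    · ring_nf

def pairGapSum (s : List ℕ) : ℕ :=
  ∑ m ∈ range (s.length / 2), (s.getD (2 * m + 1) 0 - s.getD (2 * m) 0 + 1)

lemma sig_eq_pairGapSum {r : ℕ} (I : Finset (Fin r)) :
    sig I = pairGapSum ((I.sort (· ≤ ·)).map Fin.val) := rfl

lemma pairGapSum_cons_cons (a b : ℕ) (t : List ℕ) :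
    pairGapSum (a :: b :: t) = (b - a + 1) + pairGapSum t := by
  rw [pairGapSum, pairGapSum, List.length_cons, List.length_cons,
    show (t.length + 1 + 1) / 2 = t.length / 2 + 1 by omega, sum_range_succ']
  have heven (m : ℕ) : 2 * (m + 1) = 2 * m + 1 + 1 := by ring
  simp only [heven, List.getD_cons_succ, List.getD_cons_zero, mul_zero, zero_add]
  ring

lemma pairGapSum_mod_two :
    ∀ {s : List ℕ}, s.Pairwise (· ≤ ·) → Even s.length →
      pairGapSum s % 2 = (s.sum + s.length / 2) % 2
  | [], _, _ => rfl
  | [_], _, h => absurd h (by simp)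
  | a :: b :: t, hs, h => by
    have hab : a ≤ b := List.rel_of_pairwise_cons hs (by simp)
    have ht := pairGapSum_mod_two hs.of_cons.of_cons (by simpa [parity_simps] using h)
    rw [pairGapSum_cons_cons, List.sum_cons, List.sum_cons, List.length_cons, List.length_cons]
    omega

lemma sig_mod_two {r : ℕ} (I : Finset (Fin r)) (hI : Even #I) :
    sig I % 2 = (∑ i ∈ I, (i : ℕ) + #I / 2) % 2 := by
  have hsorted : ((I.sort (· ≤ ·)).map Fin.val).Pairwise (· ≤ ·) :=
    (I.pairwise_sort (· ≤ ·)).map _ fun _ _ => id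
  have hsum : ((I.sort (· ≤ ·)).map Fin.val).sum = ∑ i ∈ I, (i : ℕ) := by
    rw [← Multiset.sum_coe, ← Multiset.map_coe, sort_eq]
    rfl
  rw [sig_eq_pairGapSum, pairGapSum_mod_two hsorted (by simpa using hI), hsum, List.length_map,
    length_sort]

lemma neg_one_pow_sig {r : ℕ} (I : Finset (Fin r)) (hI : Even #I) :
    (-1 : ℝ) ^ sig I = (-1) ^ (r * #I + ∑ i ∈ I, (i : ℕ) + (#I).choose 2) := by
  have hsig := sig_mod_two I hI
  obtain ⟨n, hn⟩ := hI
  rw [← two_mul] at hn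
  rw [hn, Nat.mul_div_cancel_left n two_pos] at hsig
  have hchoose := Nat.two_mul_choose_two_mod_two n
  refine neg_one_pow_congr ?_
  rw [Nat.even_iff, Nat.even_iff, hn, mul_left_comm]
  omega

/-- trace formula for odd `r`, in `sinh` form. -/
theorem trace_prod_eq_sum_even_subsets_of_odd (r : ℕ) (hr : Odd r)
    (l θ : Fin r → ℝ) (L : ℝ) :
    Matrix.trace ((List.ofFn fun i : Fin r => Amat (l i) (θ i)).prod * gammaMat L) =
      ∑ I ∈ Finset.univ.filter (fun I : Finset (Fin r) => Even I.card),
        (-1 : ℝ) ^ sig I * 2 * (∏ i ∈ I, Real.sin (θ i)) * (∏ i ∈ Iᶜ, Real.cos (θ i)) *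
          Real.sinh (L / 2 - altLen l I) := by
  rw [prod_Amat_eq_sum, gammaMat_eq_Smat]
  simp only [sum_mul, Matrix.smul_mul, Matrix.trace_sum, Matrix.trace_smul, smul_eq_mul]
  rw [← sum_filter_not_add_sum_filter univ (fun I : Finset (Fin r) => Even #I),
    sum_eq_zero fun I hI => ?odd, zero_add]
  case odd =>
    rw [trace_wordMat_mul_Smat_of_odd _ _ _ (Nat.not_even_iff_odd.mp (mem_filter.mp hI).2),
      mul_zero]
  refine sum_congr rfl fun I hI => ?_
  have hI : Even #I := (mem_filter.mp hI).2
  have hrI : Odd (r - #I) := Nat.Odd.sub_even (by simpa using card_le_univ I) hr hI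
  rw [trace_wordMat_mul_Smat_of_odd_of_even _ _ hrI hI, expansionCoeff, ← neg_one_pow_sig I hI]
  ring_nf
end

section
/- Let r ≥ 0 and let l_1,…,l_r, θ_1,…,θ_r be real numbers. Then the (1,1) entry of the matrix product A(l_1,θ_1)·A(l_2,θ_2)⋯A(l_r,θ_r) equals the sum over all subsets I ⊆ {1,…,r} of even cardinality of (−1)^{s(I)} · sin θ_I · cos θ_{Î} · e^{−L_I}. -/
open Finset

/-! Induct on `r`, peeling off the last factor: `(P A)₁₁ = P₁₁ cos θ - P₁₂ e^{-l} sin θ` and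
`(P A)₁₂ = -P₁₁ e^{l} sin θ - P₁₂ cos θ`, so the `(1,1)` entry is carried along with the `(1,2)`
entry, which is the analogous sum over subsets `J` of odd cardinality. A subset of `{1, …, r+1}`
either avoids `r+1` or is `J ∪ {r+1}`; since `r+1` is appended at the end of the sorted list of
`J`, it changes `L_J` by `±l_{r+1}` and either opens a new pair of `s(J)` or closes the last one. -/

def altSumList {R : Type*} [Ring R] (s : List R) : R :=
  ∑ j ∈ range s.length, (-1 : R) ^ (j + 1) * s.getD j 0

def sigList (s : List ℕ) : ℕ :=
  ∑ m ∈ range (s.length / 2), (s.getD (2 * m + 1) 0 - s.getD (2 * m) 0 + 1)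

theorem altSumList_concat {R : Type*} [Ring R] (s : List R) (x : R) :
    altSumList (s ++ [x]) = altSumList s + (-1 : R) ^ (s.length + 1) * x := by
  simp only [altSumList, List.length_append, List.length_singleton, sum_range_succ,
    List.getD_append_right _ _ _ _ le_rfl, Nat.sub_self, List.getD_cons_zero]
  congr 1
  refine sum_congr rfl fun j hj => ?_
  rw [List.getD_append _ _ _ _ (mem_range.1 hj)]

theorem sigList_concat_of_even {s : List ℕ} (hs : Even s.length) (x : ℕ) :
    sigList (s ++ [x]) = sigList s := by
  obtain ⟨k, hk⟩ := hs
  simp only [sigList, List.length_append, List.length_singleton, hk]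
  rw [show (k + k + 1) / 2 = (k + k) / 2 by omega]
  refine sum_congr rfl fun m hm => ?_
  have hm := mem_range.1 hm
  rw [List.getD_append _ _ _ _ (by omega), List.getD_append _ _ _ _ (by omega)]

theorem sigList_concat_of_odd {s : List ℕ} (hs : Odd s.length) (x : ℕ) :
    sigList (s ++ [x]) = sigList s + (x - s.getD (s.length - 1) 0 + 1) := by
  obtain ⟨k, hk⟩ := hs
  simp only [sigList, List.length_append, List.length_singleton, hk]
  rw [show (2 * k + 1 + 1) / 2 = k + 1 by omega, show (2 * k + 1) / 2 = k by omega,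
    sum_range_succ, List.getD_append_right _ _ _ _ (by omega),
    List.getD_append _ _ _ _ (by omega)]
  congr 1
  · refine sum_congr rfl fun m hm => ?_
    have hm := mem_range.1 hm
    rw [List.getD_append _ _ _ _ (by omega), List.getD_append _ _ _ _ (by omega)]
  · simp [hk, show 2 * k + 1 - 1 = 2 * k by omega]

theorem Finset.sort_insert_of_forall_lt {α : Type*} [LinearOrder α] {s : Finset α} {a : α}
    (h : ∀ b ∈ s, b < a) : (insert a s).sort (· ≤ ·) = s.sort (· ≤ ·) ++ [a] := by
  have ha : a ∉ s := fun ha => (h a ha).false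
  have hl : (s.sort (· ≤ ·) ++ [a]).toFinset = insert a s := by
    ext; simp
  rw [← hl, List.toFinset_sort]
  · exact List.pairwise_append.2 ⟨pairwise_sort _ _, by simp,
      fun b hb c hc => by simp at hb hc; exact hc ▸ (h b hb).le⟩
  · exact List.nodup_append.2 ⟨sort_nodup _ _, by simp, by simpa using ha⟩

theorem Finset.prod_mul_prod_compl_eq_prod_ite {ι M : Type*} [Fintype ι] [DecidableEq ι]
    [CommMonoid M] (I : Finset ι) (f g : ι → M) :
    (∏ i ∈ I, f i) * ∏ i ∈ Iᶜ, g i = ∏ i, if i ∈ I then f i else g i := by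
  rw [prod_ite, filter_notMem_eq_sdiff, ← compl_eq_univ_sdiff]
  simp

namespace Fin

variable {r : ℕ}

theorem sum_finset_succ {M : Type*} [AddCommMonoid M] (f : Finset (Fin (r + 1)) → M) :
    ∑ I, f I = ∑ J : Finset (Fin r), f (J.map castSuccEmb)
      + ∑ J : Finset (Fin r), f (insert (last r) (J.map castSuccEmb)) := by
  have hinj : Set.InjOn (fun J : Finset (Fin r) => J.image castSuccEmb)
      (univ.powerset : Finset (Finset (Fin r))) :=
    fun _ _ _ _ h => image_injective castSuccEmb.injective h
  rw [← powerset_univ, univ_castSuccEmb, cons_eq_insert, sum_powerset_insert (by simp),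
    map_eq_image, powerset_image, sum_image hinj, sum_image hinj]
  simp only [← map_eq_image, powerset_univ]

theorem card_insert_last_map_castSuccEmb (J : Finset (Fin r)) :
    (insert (last r) (J.map castSuccEmb)).card = J.card + 1 := by
  rw [card_insert_of_notMem (by simp [castSucc_ne_last]), card_map]

theorem sort_map_castSuccEmb (J : Finset (Fin r)) :
    (J.map castSuccEmb).sort (· ≤ ·) = (J.sort (· ≤ ·)).map castSucc :=
  (map_sort _ _ _ _ fun _ _ _ _ => castSucc_le_castSucc_iff.symm).symm

theorem sort_insert_last_map_castSuccEmb (J : Finset (Fin r)) :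
    (insert (last r) (J.map castSuccEmb)).sort (· ≤ ·)
      = (J.sort (· ≤ ·)).map castSucc ++ [last r] := by
  rw [sort_insert_of_forall_lt (by simp [castSucc_lt_last]), sort_map_castSuccEmb]

end Fin

section SubsetSums

open Fin Real

variable {r : ℕ}

theorem altLen_eq_altSumList (l : Fin r → ℝ) (I : Finset (Fin r)) :
    altLen l I = altSumList ((I.sort (· ≤ ·)).map l) := rfl

theorem sig_eq_sigList (I : Finset (Fin r)) : sig I = sigList ((I.sort (· ≤ ·)).map Fin.val) := rfl

theorem altLen_map_castSuccEmb (l : Fin (r + 1) → ℝ) (J : Finset (Fin r)) :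
    altLen l (J.map castSuccEmb) = altLen (l ∘ castSucc) J := by
  simp only [altLen_eq_altSumList, sort_map_castSuccEmb, List.map_map]

theorem altLen_insert_last (l : Fin (r + 1) → ℝ) (J : Finset (Fin r)) :
    altLen l (insert (last r) (J.map castSuccEmb))
      = altLen (l ∘ castSucc) J + (-1) ^ (J.card + 1) * l (last r) := by
  simp only [altLen_eq_altSumList, sort_insert_last_map_castSuccEmb, List.map_append,
    List.map_map, List.map_singleton, altSumList_concat, List.length_map, length_sort]

theorem sig_map_castSuccEmb (J : Finset (Fin r)) : sig (J.map castSuccEmb) = sig J := by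
  simp only [sig_eq_sigList, sort_map_castSuccEmb, List.map_map]
  rfl

def sigSnoc (J : Finset (Fin r)) (x : ℕ) : ℕ :=
  sigList ((J.sort (· ≤ ·)).map Fin.val ++ [x])

theorem sig_insert_last (J : Finset (Fin r)) :
    sig (insert (last r) (J.map castSuccEmb)) = sigSnoc J r := by
  simp only [sig_eq_sigList, sigSnoc, sort_insert_last_map_castSuccEmb, List.map_append,
    List.map_map, List.map_singleton, Fin.val_last]
  rfl

theorem sigSnoc_map_castSuccEmb {J : Finset (Fin r)} (hJ : Odd J.card) :
    sigSnoc (J.map castSuccEmb) (r + 1) = sigSnoc J r + 1 := by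
  set s := (J.sort (· ≤ ·)).map Fin.val
  have hs : Odd s.length := by simpa [s] using hJ
  have hle : s.getD (s.length - 1) 0 ≤ r := by
    have hlt : s.length - 1 < s.length := Nat.sub_one_lt hs.pos.ne'
    obtain ⟨i, -, hi⟩ := List.mem_map.1 (s.getElem_mem hlt)
    rw [List.getD_eq_getElem _ _ hlt, ← hi]
    exact i.isLt.le
  have hmap : ((J.map castSuccEmb).sort (· ≤ ·)).map Fin.val = s := by
    simp only [sort_map_castSuccEmb, List.map_map, s]
    rfl
  rw [sigSnoc, sigSnoc, hmap, sigList_concat_of_odd hs, sigList_concat_of_odd hs]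
  omega

theorem sigSnoc_insert_last {J : Finset (Fin r)} (hJ : Even J.card) :
    sigSnoc (insert (last r) (J.map castSuccEmb)) (r + 1) = sig J + 2 := by
  set s := (J.sort (· ≤ ·)).map Fin.val
  have hs : Even s.length := by simpa [s] using hJ
  have hinsert : ((insert (last r) (J.map castSuccEmb)).sort (· ≤ ·)).map Fin.val = s ++ [r] := by
    simp only [sort_insert_last_map_castSuccEmb, List.map_append, List.map_map,
      List.map_singleton, Fin.val_last, s]
    rfl
  rw [sigSnoc, hinsert, sigList_concat_of_odd (by simpa [Nat.odd_add_one] using hs),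
    sigList_concat_of_even hs, sig_eq_sigList]
  simp [s]

noncomputable def subsetTerm (l θ : Fin r → ℝ) (I : Finset (Fin r)) : ℝ :=
  (∏ i, if i ∈ I then sin (θ i) else cos (θ i)) * exp (-altLen l I)

theorem subsetTerm_map_castSuccEmb (l θ : Fin (r + 1) → ℝ) (J : Finset (Fin r)) :
    subsetTerm l θ (J.map castSuccEmb)
      = subsetTerm (l ∘ castSucc) (θ ∘ castSucc) J * cos (θ (last r)) := by
  simp only [subsetTerm, altLen_map_castSuccEmb, prod_univ_castSucc]
  simp [castSucc_ne_last]
  ring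

theorem subsetTerm_insert_last (l θ : Fin (r + 1) → ℝ) (J : Finset (Fin r)) :
    subsetTerm l θ (insert (last r) (J.map castSuccEmb))
      = subsetTerm (l ∘ castSucc) (θ ∘ castSucc) J * sin (θ (last r))
          * exp (-((-1) ^ (J.card + 1) * l (last r))) := by
  simp only [subsetTerm, altLen_insert_last, prod_univ_castSucc, neg_add, exp_add]
  simp [castSucc_ne_last]
  ring

noncomputable def evenSubsetSum (r : ℕ) (l θ : Fin r → ℝ) : ℝ :=
  ∑ I with Even I.card, (-1) ^ sig I * subsetTerm l θ I

/-- The `(1,2)` entry of the product: the column index acts as an extra index `r` of the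
subset, which closes the last pair of an odd `J`. -/
noncomputable def oddSubsetSum (r : ℕ) (l θ : Fin r → ℝ) : ℝ :=
  ∑ J with Odd J.card, -((-1) ^ sigSnoc J r * subsetTerm l θ J)

theorem evenSubsetSum_succ (l θ : Fin (r + 1) → ℝ) :
    evenSubsetSum (r + 1) l θ
      = evenSubsetSum r (l ∘ castSucc) (θ ∘ castSucc) * cos (θ (last r))
        + oddSubsetSum r (l ∘ castSucc) (θ ∘ castSucc)
          * (-exp (-l (last r)) * sin (θ (last r))) := by
  simp only [evenSubsetSum, oddSubsetSum, sum_filter, sum_finset_succ, sum_mul]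
  congr 1
  · refine sum_congr rfl fun J _ => ?_
    rw [card_map]
    split_ifs
    · rw [sig_map_castSuccEmb, subsetTerm_map_castSuccEmb]; ring
    · simp
  · refine sum_congr rfl fun J _ => ?_
    rw [card_insert_last_map_castSuccEmb]
    by_cases hJ : Odd J.card
    · rw [if_pos hJ.add_one, if_pos hJ, sig_insert_last, subsetTerm_insert_last,
        hJ.add_one.neg_one_pow]
      ring_nf
    · rw [if_neg (by simpa [Nat.even_add_one] using hJ), if_neg hJ, zero_mul]

theorem oddSubsetSum_succ (l θ : Fin (r + 1) → ℝ) :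
    oddSubsetSum (r + 1) l θ
      = evenSubsetSum r (l ∘ castSucc) (θ ∘ castSucc) * (-exp (l (last r)) * sin (θ (last r)))
        + oddSubsetSum r (l ∘ castSucc) (θ ∘ castSucc) * -cos (θ (last r)) := by
  simp only [evenSubsetSum, oddSubsetSum, sum_filter, sum_finset_succ, sum_mul]
  rw [add_comm]
  congr 1
  · refine sum_congr rfl fun J _ => ?_
    rw [card_insert_last_map_castSuccEmb]
    by_cases hJ : Even J.card
    · rw [if_pos hJ.add_one, if_pos hJ, sigSnoc_insert_last hJ, subsetTerm_insert_last,
        hJ.add_one.neg_one_pow]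
      ring_nf
    · rw [if_neg (by simpa [Nat.odd_add_one] using hJ), if_neg hJ, zero_mul]
  · refine sum_congr rfl fun J _ => ?_
    rw [card_map]
    split_ifs with hJ
    · rw [sigSnoc_map_castSuccEmb hJ, subsetTerm_map_castSuccEmb]; ring
    · simp

end SubsetSums

theorem prod_amat_entries (r : ℕ) (l θ : Fin r → ℝ) :
    (List.ofFn fun i => Amat (l i) (θ i)).prod 0 0 = evenSubsetSum r l θ ∧
      (List.ofFn fun i => Amat (l i) (θ i)).prod 0 1 = oddSubsetSum r l θ := by
  induction r with
  | zero =>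
    rw [evenSubsetSum, oddSubsetSum, show (univ : Finset (Finset (Fin 0))) = {∅} from rfl]
    simp [filter_singleton, subsetTerm, sig, altLen]
  | succ r ih =>
    obtain ⟨h00, h01⟩ := ih (l ∘ Fin.castSucc) (θ ∘ Fin.castSucc)
    simp only [Function.comp_apply] at h00 h01
    simp only [List.ofFn_succ', List.prod_concat, Matrix.mul_apply, Fin.sum_univ_two, h00, h01,
      evenSubsetSum_succ, oddSubsetSum_succ]
    simp [Amat]

/-- the (1,1) entry of `A(l_1,θ_1)⋯A(l_r,θ_r)`. -/
theorem entry_one_one_prod (r : ℕ) (l θ : Fin r → ℝ) :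
    ((List.ofFn fun i : Fin r => Amat (l i) (θ i)).prod) 0 0 =
      ∑ I ∈ Finset.univ.filter (fun I : Finset (Fin r) => Even I.card),
        (-1 : ℝ) ^ sig I * (∏ i ∈ I, Real.sin (θ i)) * (∏ i ∈ Iᶜ, Real.cos (θ i)) *
          Real.exp (-altLen l I) := by
  rw [(prod_amat_entries r l θ).1, evenSubsetSum]
  refine sum_congr rfl fun I _ => ?_
  rw [subsetTerm, ← prod_mul_prod_compl_eq_prod_ite]
  ring
end

section
/- Let n ≥ 1, let l_1,…,l_n, θ_1,…,θ_n, L be real numbers, let f_1,…,f_n be invertible 2×2 real matrices satisfying f_i⁻¹ D f_i = A(l_i, θ_i) for each i, and define T : ℝ → ℝ by T(z) = Tr( (f_1⁻¹ S(z) f_1)⋯(f_n⁻¹ S(z) f_n)·γ_L ). Then the third derivative of T at 0 equals (1/8)·[ (6n − 4)·sinh(L/2)·Σ_{i=1}^n cos θ_i + 12·Σ_{1 ≤ i < j < k ≤ n} ( sinh(L/2) cos θ_i cos θ_j cos θ_k + sinh(L/2 − (l_j − l_i)) sin θ_i sin θ_j cos θ_k − sinh(L/2 − (l_k − l_i)) sin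 θ_i cos θ_j sin θ_k + sinh(L/2 − (l_k − l_j)) cos θ_i sin θ_j sin θ_k ) ]. -/
open Finset

/-!
Since `S(z) = cosh(z/2) • 1 + sinh(z/2) • D`, each factor `fᵢ⁻¹ S(z) fᵢ` equals
`cosh(z/2) • 1 + sinh(z/2) • Aᵢ`, so expanding the ordered product gives
`T(z) = ∑ₖ cosh(z/2)^(n-k) sinh(z/2)^k tr(eₖ γ_L)`, where `eₖ` is the sum of the ordered products
`A_{i₁} ⋯ A_{iₖ}` with `i₁ < ⋯ < iₖ`. The third derivative at `0` of `cosh(z/2)^a sinh(z/2)^b`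
vanishes unless `b = 1`, where it is `(3a + 1)/8`, or `b = 3`, where it is `3/4`; so only
`tr(e₁ γ_L)` and `tr(e₃ γ_L)` survive, and they reduce to the traces of `A γ_L` and `A A A γ_L`.
Derivatives are computed symbolically on formal combinations of the `cosh^a sinh^b`, a family that
is closed under differentiation.
-/

noncomputable def coshSinhPow (a b : ℕ) (z : ℝ) : ℝ := Real.cosh (z / 2) ^ a * Real.sinh (z / 2) ^ b

theorem hasDerivAt_coshSinhPow (a b : ℕ) (z : ℝ) :
    HasDerivAt (coshSinhPow a b)
      (a / 2 * coshSinhPow (a - 1) (b + 1) z + b / 2 * coshSinhPow (a + 1) (b - 1) z) z := by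
  have hc := ((Real.hasDerivAt_cosh (z / 2)).comp z ((hasDerivAt_id z).div_const 2)).pow a
  have hs := ((Real.hasDerivAt_sinh (z / 2)).comp z ((hasDerivAt_id z).div_const 2)).pow b
  refine (hc.mul hs).congr_deriv ?_
  simp only [coshSinhPow, Function.comp_apply, Pi.pow_apply, id, pow_succ]
  ring

noncomputable def evalCoshSinh (P : List (ℝ × ℕ × ℕ)) (z : ℝ) : ℝ :=
  (P.map fun p => p.1 * coshSinhPow p.2.1 p.2.2 z).sum

/-- The truncated `a - 1` and `b - 1` only occur with coefficient `0`. -/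
noncomputable def derivCoshSinh (P : List (ℝ × ℕ × ℕ)) : List (ℝ × ℕ × ℕ) :=
  P.flatMap fun p =>
    [(p.1 * p.2.1 / 2, p.2.1 - 1, p.2.2 + 1), (p.1 * p.2.2 / 2, p.2.1 + 1, p.2.2 - 1)]

@[simp]
theorem evalCoshSinh_append (P Q : List (ℝ × ℕ × ℕ)) (z : ℝ) :
    evalCoshSinh (P ++ Q) z = evalCoshSinh P z + evalCoshSinh Q z := by
  simp [evalCoshSinh]

@[simp]
theorem derivCoshSinh_append (P Q : List (ℝ × ℕ × ℕ)) :
    derivCoshSinh (P ++ Q) = derivCoshSinh P ++ derivCoshSinh Q := by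
  simp [derivCoshSinh]

theorem derivCoshSinh_iterate_append (m : ℕ) (P Q : List (ℝ × ℕ × ℕ)) :
    derivCoshSinh^[m] (P ++ Q) = derivCoshSinh^[m] P ++ derivCoshSinh^[m] Q := by
  induction m generalizing P Q with
  | zero => rfl
  | succ m ih => simp only [Function.iterate_succ_apply, derivCoshSinh_append, ih]

theorem hasDerivAt_evalCoshSinh (P : List (ℝ × ℕ × ℕ)) (z : ℝ) :
    HasDerivAt (evalCoshSinh P) (evalCoshSinh (derivCoshSinh P) z) z := by
  induction P with
  | nil => exact hasDerivAt_const z (0 : ℝ)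
  | cons p P ih =>
    have hp := ((hasDerivAt_coshSinhPow p.2.1 p.2.2 z).const_mul p.1).add ih
    have hfun : evalCoshSinh (p :: P) =
        (fun y => p.1 * coshSinhPow p.2.1 p.2.2 y) + evalCoshSinh P := by
      ext y; simp [evalCoshSinh]
    rw [hfun]
    refine hp.congr_deriv ?_
    simp [evalCoshSinh, derivCoshSinh]
    ring

theorem iteratedDeriv_evalCoshSinh (m : ℕ) (P : List (ℝ × ℕ × ℕ)) :
    iteratedDeriv m (evalCoshSinh P) = evalCoshSinh (derivCoshSinh^[m] P) := by
  induction m generalizing P with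
  | zero => simp
  | succ m ih =>
    rw [iteratedDeriv_succ', Function.iterate_succ_apply, ← ih]
    congr 1
    exact funext fun z => (hasDerivAt_evalCoshSinh P z).deriv

noncomputable def coshSinhThirdDeriv (a b : ℕ) : ℝ :=
  (if b = 1 then (3 * (a : ℝ) + 1) / 8 else 0) + (if b = 3 then 3 / 4 else 0)

theorem evalCoshSinh_derivCoshSinh_three_singleton (t : ℝ) (a b : ℕ) :
    evalCoshSinh (derivCoshSinh^[3] [(t, a, b)]) 0 = t * coshSinhThirdDeriv a b := by
  match b with
  | 0 | 1 | 2 | 3 => simp [evalCoshSinh, derivCoshSinh, coshSinhPow, coshSinhThirdDeriv] <;> ring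
  | b + 4 => simp [evalCoshSinh, derivCoshSinh, coshSinhPow, coshSinhThirdDeriv]

theorem iteratedDeriv_three_evalCoshSinh_zero (P : List (ℝ × ℕ × ℕ)) :
    iteratedDeriv 3 (evalCoshSinh P) 0 =
      (P.map fun p => p.1 * coshSinhThirdDeriv p.2.1 p.2.2).sum := by
  rw [iteratedDeriv_evalCoshSinh]
  induction P with
  | nil => simp [evalCoshSinh, derivCoshSinh]
  | cons p P ih =>
    rw [← List.singleton_append, derivCoshSinh_iterate_append, evalCoshSinh_append, ih,
      evalCoshSinh_derivCoshSinh_three_singleton]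
    simp

theorem iteratedDeriv_three_sum_antidiagonal_coshSinhPow (n : ℕ) (t : ℕ → ℝ)
    (ht : ∀ k, n < k → t k = 0) :
    iteratedDeriv 3 (fun z => ∑ p ∈ antidiagonal n, t p.2 * coshSinhPow p.1 p.2 z) 0 =
      (3 * n - 2) / 8 * t 1 + 3 / 4 * t 3 := by
  have hfun : (fun z => ∑ p ∈ antidiagonal n, t p.2 * coshSinhPow p.1 p.2 z) =
      evalCoshSinh ((antidiagonal n).toList.map fun p => (t p.2, p.1, p.2)) := by
    ext z; simp [evalCoshSinh]
  rw [hfun, iteratedDeriv_three_evalCoshSinh_zero, List.map_map, Finset.sum_map_toList]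
  simp only [Function.comp_apply, coshSinhThirdDeriv, mul_add, sum_add_distrib, mul_ite, mul_zero]
  rw [← sum_filter, ← sum_filter, HasAntidiagonal.filter_snd_eq_antidiagonal n 1,
    HasAntidiagonal.filter_snd_eq_antidiagonal n 3]
  split_ifs with h1 h3 h3
  · simp only [sum_singleton, Nat.cast_sub h1]
    ring
  · simp [ht 3 (by omega), Nat.cast_sub h1]
    ring
  · omega
  · simp [ht 1 (by omega), ht 3 (by omega)]

section OrderedEsymm

variable {R : Type*} [Semiring R]

def orderedEsymm (M : List R) (k : ℕ) : R := ((M.sublistsLen k).map List.prod).sum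

@[simp]
theorem orderedEsymm_zero (M : List R) : orderedEsymm M 0 = 1 := by
  simp [orderedEsymm]

theorem orderedEsymm_cons_succ (a : R) (M : List R) (k : ℕ) :
    orderedEsymm (a :: M) (k + 1) = orderedEsymm M (k + 1) + a * orderedEsymm M k := by
  simp [orderedEsymm, Function.comp_def, List.sum_map_mul_left]

theorem orderedEsymm_of_length_lt {M : List R} {k : ℕ} (h : M.length < k) :
    orderedEsymm M k = 0 := by
  simp [orderedEsymm, List.sublistsLen_of_length_lt h]

theorem list_prod_map_smul_one_add_smul {K : Type*} [CommSemiring K] [Algebra K R] (c s : K)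
    (M : List R) :
    (M.map fun a => c • (1 : R) + s • a).prod =
      ∑ p ∈ antidiagonal M.length, (c ^ p.1 * s ^ p.2) • orderedEsymm M p.2 := by
  induction M with
  | nil => simp [orderedEsymm]
  | cons a M ih =>
    let g : ℕ × ℕ → R := fun p => (c ^ p.1 * s ^ p.2) • orderedEsymm M p.2
    have hshift : ∑ p ∈ antidiagonal M.length, (c ^ (p.1 + 1) * s ^ p.2) • orderedEsymm M p.2 =
        c ^ (M.length + 1) • (1 : R) +
          ∑ p ∈ antidiagonal M.length, (c ^ p.1 * s ^ (p.2 + 1)) • orderedEsymm M (p.2 + 1) := by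
      have h₁ := Nat.sum_antidiagonal_succ (n := M.length) (f := g)
      have h₂ := Nat.sum_antidiagonal_succ' (n := M.length) (f := g)
      simp only [g, orderedEsymm_of_length_lt (Nat.lt_succ_self _), smul_zero, zero_add,
        orderedEsymm_zero, pow_zero, mul_one] at h₁ h₂
      rw [← h₁, h₂]
    rw [List.map_cons, List.prod_cons, ih, List.length_cons, Nat.sum_antidiagonal_succ']
    simp only [add_mul, smul_mul_assoc, one_mul, Finset.mul_sum, sum_add_distrib,
      orderedEsymm_cons_succ, smul_add, pow_zero, mul_one, orderedEsymm_zero, ← add_assoc]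
    rw [← hshift]
    congr 1 <;> refine sum_congr rfl fun p _ => ?_
    · rw [smul_smul, pow_succ]
      ring_nf
    · rw [mul_smul_comm, smul_smul, pow_succ]
      ring_nf

theorem orderedEsymm_ofFn_one {n : ℕ} (g : Fin n → R) :
    orderedEsymm (List.ofFn g) 1 = ∑ i, g i := by
  induction n with
  | zero => simp [orderedEsymm]
  | succ n ih =>
    rw [List.ofFn_succ, orderedEsymm_cons_succ, ih, orderedEsymm_zero, mul_one,
      Fin.sum_univ_succ, add_comm]

theorem orderedEsymm_ofFn_two {n : ℕ} (g : Fin n → R) :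
    orderedEsymm (List.ofFn g) 2 = ∑ i, ∑ j ∈ Ioi i, g i * g j := by
  induction n with
  | zero => simp [orderedEsymm]
  | succ n ih =>
    rw [List.ofFn_succ, orderedEsymm_cons_succ, ih, orderedEsymm_ofFn_one, Fin.sum_univ_succ,
      Fin.sum_Ioi_zero, Finset.mul_sum, add_comm]
    simp only [Fin.sum_Ioi_succ]

theorem orderedEsymm_ofFn_three {n : ℕ} (g : Fin n → R) :
    orderedEsymm (List.ofFn g) 3 = ∑ i, ∑ j ∈ Ioi i, ∑ k ∈ Ioi j, g i * g j * g k := by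
  induction n with
  | zero => simp [orderedEsymm]
  | succ n ih =>
    rw [List.ofFn_succ, orderedEsymm_cons_succ, ih, orderedEsymm_ofFn_two, Fin.sum_univ_succ,
      Fin.sum_Ioi_zero, Finset.mul_sum, add_comm]
    simp only [Fin.sum_Ioi_succ, Finset.mul_sum, mul_assoc]

end OrderedEsymm

theorem Smat_eq (z : ℝ) :
    Smat z = Real.cosh (z / 2) • (1 : Matrix (Fin 2) (Fin 2) ℝ) + Real.sinh (z / 2) • Dmat := by
  rw [Smat, ← Real.cosh_add_sinh, ← Real.cosh_sub_sinh, Matrix.one_fin_two, Dmat]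
  ext i j
  fin_cases i <;> fin_cases j <;> simp [sub_eq_add_neg]

theorem inv_mul_Smat_mul {F : Matrix (Fin 2) (Fin 2) ℝ} (hF : IsUnit F) (z : ℝ) :
    F⁻¹ * Smat z * F = Real.cosh (z / 2) • (1 : Matrix (Fin 2) (Fin 2) ℝ) +
      Real.sinh (z / 2) • (F⁻¹ * Dmat * F) := by
  rw [Smat_eq, mul_add, add_mul, Matrix.mul_smul, Matrix.smul_mul, Matrix.mul_smul,
    Matrix.smul_mul, mul_one, Matrix.nonsing_inv_mul F ((Matrix.isUnit_iff_isUnit_det F).mp hF)]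

theorem trace_list_prod_inv_mul_Smat_mul {n : ℕ} {f A : Fin n → Matrix (Fin 2) (Fin 2) ℝ}
    (hf : ∀ i, IsUnit (f i)) (hA : ∀ i, (f i)⁻¹ * Dmat * f i = A i)
    (G : Matrix (Fin 2) (Fin 2) ℝ) (z : ℝ) :
    Matrix.trace ((List.ofFn fun i => (f i)⁻¹ * Smat z * f i).prod * G) =
      ∑ p ∈ antidiagonal n,
        Matrix.trace (orderedEsymm (List.ofFn A) p.2 * G) * coshSinhPow p.1 p.2 z := by
  have hfactors : (List.ofFn fun i => (f i)⁻¹ * Smat z * f i) =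
      (List.ofFn A).map
        fun a => Real.cosh (z / 2) • (1 : Matrix (Fin 2) (Fin 2) ℝ) + Real.sinh (z / 2) • a := by
    simp only [List.map_ofFn, Function.comp_def, inv_mul_Smat_mul (hf _), hA]
  rw [hfactors, list_prod_map_smul_one_add_smul, List.length_ofFn, Finset.sum_mul,
    Matrix.trace_sum]
  refine sum_congr rfl fun p _ => ?_
  rw [smul_mul_assoc, Matrix.trace_smul, smul_eq_mul, mul_comm, coshSinhPow]

theorem trace_Amat_mul_gammaMat (l θ L : ℝ) :
    Matrix.trace (Amat l θ * gammaMat L) = 2 * Real.sinh (L / 2) * Real.cos θ := by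
  rw [Amat, gammaMat, Matrix.mul_fin_two, Matrix.trace_fin_two, Real.sinh_eq]
  simp
  ring

theorem trace_Amat_mul_Amat_mul_Amat_mul_gammaMat (li lj lk θi θj θk L : ℝ) :
    Matrix.trace (Amat li θi * Amat lj θj * Amat lk θk * gammaMat L) =
      2 * (Real.sinh (L / 2) * Real.cos θi * Real.cos θj * Real.cos θk +
        Real.sinh (L / 2 - (lj - li)) * Real.sin θi * Real.sin θj * Real.cos θk -
        Real.sinh (L / 2 - (lk - li)) * Real.sin θi * Real.cos θj * Real.sin θk +
        Real.sinh (L / 2 - (lk - lj)) * Real.cos θi * Real.sin θj * Real.sin θk) := by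
  rw [Amat, Amat, Amat, gammaMat, Matrix.mul_fin_two, Matrix.mul_fin_two, Matrix.mul_fin_two,
    Matrix.trace_fin_two]
  simp only [Real.sinh_eq, Real.exp_sub, Real.exp_neg, Matrix.of_apply,
    Matrix.cons_val', Matrix.cons_val_zero, Matrix.cons_val_one, Matrix.empty_val',
    Matrix.cons_val_fin_one]
  field_simp
  ring

section

variable {n : ℕ} (l θ : Fin n → ℝ) (L : ℝ)

theorem trace_orderedEsymm_one_mul_gammaMat :
    Matrix.trace (orderedEsymm (List.ofFn fun i => Amat (l i) (θ i)) 1 * gammaMat L) =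
      2 * Real.sinh (L / 2) * ∑ i, Real.cos (θ i) := by
  simp only [orderedEsymm_ofFn_one, Finset.sum_mul, Matrix.trace_sum, trace_Amat_mul_gammaMat,
    Finset.mul_sum]

theorem trace_orderedEsymm_three_mul_gammaMat :
    Matrix.trace (orderedEsymm (List.ofFn fun i => Amat (l i) (θ i)) 3 * gammaMat L) =
      2 * ∑ i : Fin n, ∑ j ∈ Ioi i, ∑ k ∈ Ioi j,
        (Real.sinh (L / 2) * Real.cos (θ i) * Real.cos (θ j) * Real.cos (θ k) +
          Real.sinh (L / 2 - (l j - l i)) * Real.sin (θ i) * Real.sin (θ j) * Real.cos (θ k) -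
          Real.sinh (L / 2 - (l k - l i)) * Real.sin (θ i) * Real.cos (θ j) * Real.sin (θ k) +
          Real.sinh (L / 2 - (l k - l j)) * Real.cos (θ i) * Real.sin (θ j) * Real.sin (θ k)) := by
  simp only [orderedEsymm_ofFn_three, Finset.sum_mul, Matrix.trace_sum,
    trace_Amat_mul_Amat_mul_Amat_mul_gammaMat, Finset.mul_sum]

end

theorem iteratedDeriv_three_trace_eq_general (n : ℕ) (l θ : Fin n → ℝ) (L : ℝ)
    (f : Fin n → Matrix (Fin 2) (Fin 2) ℝ) (hf : ∀ i, IsUnit (f i))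
    (hA : ∀ i, (f i)⁻¹ * Dmat * f i = Amat (l i) (θ i)) :
    iteratedDeriv 3
      (fun z : ℝ =>
        Matrix.trace
          ((List.ofFn fun i : Fin n => (f i)⁻¹ * Smat z * f i).prod * gammaMat L)) 0 =
    (1 / 8 : ℝ) *
      ((6 * (n : ℝ) - 4) * Real.sinh (L / 2) * ∑ i, Real.cos (θ i) +
        12 * ∑ i : Fin n, ∑ j ∈ Finset.Ioi i, ∑ k ∈ Finset.Ioi j,
          (Real.sinh (L / 2) * Real.cos (θ i) * Real.cos (θ j) * Real.cos (θ k) +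
            Real.sinh (L / 2 - (l j - l i)) * Real.sin (θ i) * Real.sin (θ j) *
              Real.cos (θ k) -
            Real.sinh (L / 2 - (l k - l i)) * Real.sin (θ i) * Real.cos (θ j) *
              Real.sin (θ k) +
            Real.sinh (L / 2 - (l k - l j)) * Real.cos (θ i) * Real.sin (θ j) *
              Real.sin (θ k))) := by
  have hhigh : ∀ k, n < k →
      Matrix.trace (orderedEsymm (List.ofFn fun i => Amat (l i) (θ i)) k * gammaMat L) = 0 :=
    fun k hk => by
      rw [orderedEsymm_of_length_lt (by simpa using hk), Matrix.zero_mul, Matrix.trace_zero]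
  rw [funext (trace_list_prod_inv_mul_Smat_mul hf hA (gammaMat L)),
    iteratedDeriv_three_sum_antidiagonal_coshSinhPow n _ hhigh,
    trace_orderedEsymm_one_mul_gammaMat, trace_orderedEsymm_three_mul_gammaMat]
  ring

/-- third derivative of `T` at `0`. -/
theorem iteratedDeriv_three_trace_eq (n : ℕ) (hn : 1 ≤ n) (l θ : Fin n → ℝ) (L : ℝ)
    (f : Fin n → Matrix (Fin 2) (Fin 2) ℝ) (hf : ∀ i, IsUnit (f i))
    (hA : ∀ i, (f i)⁻¹ * Dmat * f i = Amat (l i) (θ i)) :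
    iteratedDeriv 3
      (fun z : ℝ =>
        Matrix.trace
          ((List.ofFn fun i : Fin n => (f i)⁻¹ * Smat z * f i).prod * gammaMat L)) 0 =
    (1 / 8 : ℝ) *
      ((6 * (n : ℝ) - 4) * Real.sinh (L / 2) * ∑ i, Real.cos (θ i) +
        12 * ∑ i : Fin n, ∑ j ∈ Finset.Ioi i, ∑ k ∈ Finset.Ioi j,
          (Real.sinh (L / 2) * Real.cos (θ i) * Real.cos (θ j) * Real.cos (θ k) +
            Real.sinh (L / 2 - (l j - l i)) * Real.sin (θ i) * Real.sin (θ j) *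
              Real.cos (θ k) -
            Real.sinh (L / 2 - (l k - l i)) * Real.sin (θ i) * Real.cos (θ j) *
              Real.sin (θ k) +
            Real.sinh (L / 2 - (l k - l j)) * Real.cos (θ i) * Real.sin (θ j) *
              Real.sin (θ k))) :=
  iteratedDeriv_three_trace_eq_general n l θ L f hf hA
end
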